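/- Let M be the symmetric block matrix with diagonal block E (t×t), a repeated off-diagonal block γ (t×s) in the first block row/column, and z copies of F (s×s) on the diagonal with Q (s×s) in all remaining off-diagonal positions. Then the spectrum of F - Q is contained in the spectrum of M with multiplicity z-1, and the remaining s+t eigenvalues of M are the eigenvalues of the matrix M' = [[E, √z γ],[√z γᵀ, F+(z-1)Q]]. -/

import Mathlib

/-!
Write the lower-right block of `M` as `1 ⊗ (F - Q) + J ⊗ Q` with `J = 𝟙𝟙ᵀ`, and conjugate `M` by
`diag(1, U ⊗ 1)` where `U` is orthogonal with first column `𝟙 / √z`. Then `Uᵀ 𝟙 = √z e₀`, so `J`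
becomes `z e₀e₀ᵀ` and the `γ`-blocks concentrate in block `0` with weight `√z`. Splitting off
block `0` leaves `M'` and `z - 1` decoupled copies of `F - Q`.
-/

open Matrix
open scoped Kronecker

namespace Matrix

variable {R : Type*} [CommRing R] {m n ι : Type*}

theorem charpoly_transpose_mul_mul_of_transpose_mul_eq_one [Fintype n] [DecidableEq n]
    {P : Matrix n n R} (hP : Pᵀ * P = 1) (A : Matrix n n R) :
    (Pᵀ * A * P).charpoly = A.charpoly := by
  rw [Matrix.mul_assoc, charpoly_mul_comm, Matrix.mul_assoc, mul_eq_one_comm.mp hP,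
    Matrix.mul_one]

theorem exists_orthogonal_transpose_mulVec_eq_single [Fintype ι] [DecidableEq ι] (v : ι → ℝ)
    (hv : v ⬝ᵥ v = 1) (a : ι) :
    ∃ U : Matrix ι ι ℝ, Uᵀ * U = 1 ∧ Uᵀ *ᵥ v = Pi.single a 1 := by
  have hunit : Orthonormal ℝ (({a} : Set ι).domRestrict fun _ => WithLp.toLp 2 v) := by
    rw [orthonormal_iff_ite]
    rintro ⟨i, rfl⟩ ⟨j, rfl⟩
    rw [if_pos rfl]
    exact (EuclideanSpace.inner_toLp_toLp v v).trans hv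
  obtain ⟨b, hb⟩ := hunit.exists_orthonormalBasis_extension_of_card_eq (by simp)
  set U := (EuclideanSpace.basisFun ι ℝ).toBasis.toMatrix b
  have hU : Uᵀ * U = 1 := (mem_orthogonalGroup_iff' ι ℝ).mp
    ((EuclideanSpace.basisFun ι ℝ).toMatrix_orthonormalBasis_mem_orthogonal b)
  have hcol : U *ᵥ Pi.single a 1 = v := by
    ext k
    simp [U, Module.Basis.toMatrix_apply, hb a rfl]
  refine ⟨U, hU, ?_⟩
  rw [← hcol, mulVec_mulVec, hU, one_mulVec]

variable [DecidableEq ι]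

theorem charmatrix_one_kronecker [Fintype n] [Fintype ι] [DecidableEq n] (G : Matrix n n R) :
    charmatrix ((1 : Matrix ι ι R) ⊗ₖ G) = 1 ⊗ₖ charmatrix G := by
  ext ⟨i, k⟩ ⟨j, l⟩
  by_cases hij : i = j <;> by_cases hkl : k = l <;> simp [charmatrix, hij, hkl]

theorem charpoly_one_kronecker [Fintype n] [Fintype ι] [DecidableEq n] (G : Matrix n n R) :
    ((1 : Matrix ι ι R) ⊗ₖ G).charpoly = G.charpoly ^ Fintype.card ι := by
  rw [charpoly, charmatrix_one_kronecker, det_kronecker, det_one, one_pow, one_mul, charpoly]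

variable (ι) in
/-- The matrix `M` of the theorem is the case `w = 𝟙`, `G = F - Q`. -/
def replicatedBlockMatrix (w : ι → R) (E : Matrix m m R) (γ : Matrix m n R) (G Q : Matrix n n R) :
    Matrix (m ⊕ ι × n) (m ⊕ ι × n) R :=
  fromBlocks E (of fun i p => w p.1 * γ i p.2) (of fun p j => w p.1 * γ j p.2)
    (1 ⊗ₖ G + vecMulVec w w ⊗ₖ Q)

theorem transpose_mul_replicatedBlockMatrix_mul [Fintype m] [Fintype n] [Fintype ι]
    [DecidableEq m] [DecidableEq n] {U : Matrix ι ι R} (hU : Uᵀ * U = 1)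
    (w : ι → R) (E : Matrix m m R) (γ : Matrix m n R) (G Q : Matrix n n R) :
    (fromBlocks 1 0 0 (U ⊗ₖ 1))ᵀ * replicatedBlockMatrix ι w E γ G Q * fromBlocks 1 0 0 (U ⊗ₖ 1)
      = replicatedBlockMatrix ι (Uᵀ *ᵥ w) E γ G Q := by
  simp only [replicatedBlockMatrix, fromBlocks_transpose, fromBlocks_multiply, transpose_one,
    transpose_zero, Matrix.one_mul, Matrix.zero_mul, Matrix.mul_zero, add_zero, zero_add,
    Matrix.mul_one, ← kroneckerMap_transpose]
  congr 1
  · ext i ⟨l, j⟩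
    simp [mul_apply, one_apply, Fintype.sum_prod_type, mulVec, dotProduct, Finset.mul_sum,
      mul_comm, mul_left_comm]
  · ext ⟨k, i⟩ j
    simp [mul_apply, one_apply, Fintype.sum_prod_type, mulVec, dotProduct, Finset.mul_sum,
      mul_comm, mul_left_comm]
  · rw [Matrix.mul_add, Matrix.add_mul, ← mul_kronecker_mul, ← mul_kronecker_mul,
      ← mul_kronecker_mul, ← mul_kronecker_mul, Matrix.mul_one, hU, Matrix.one_mul, Matrix.one_mul,
      Matrix.mul_one, Matrix.mul_one, mul_vecMulVec, vecMulVec_mul, ← mulVec_transpose]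

theorem charpoly_replicatedBlockMatrix_transpose_mulVec [Fintype m] [Fintype n] [Fintype ι]
    [DecidableEq m] [DecidableEq n] {U : Matrix ι ι R} (hU : Uᵀ * U = 1)
    (w : ι → R) (E : Matrix m m R) (γ : Matrix m n R) (G Q : Matrix n n R) :
    (replicatedBlockMatrix ι (Uᵀ *ᵥ w) E γ G Q).charpoly =
      (replicatedBlockMatrix ι w E γ G Q).charpoly := by
  have hP : (fromBlocks 1 0 0 (U ⊗ₖ 1))ᵀ * fromBlocks 1 0 0 (U ⊗ₖ (1 : Matrix n n R)) =
      (1 : Matrix (m ⊕ ι × n) (m ⊕ ι × n) R) := by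
    rw [fromBlocks_transpose, fromBlocks_multiply, ← kroneckerMap_transpose, ← mul_kronecker_mul,
      hU]
    simp
  rw [← transpose_mul_replicatedBlockMatrix_mul hU,
    charpoly_transpose_mul_mul_of_transpose_mul_eq_one hP]

variable (m n) in
def splitBlockEquiv (a : ι) : m ⊕ ι × n ≃ (m ⊕ n) ⊕ {k // k ≠ a} × n :=
  (Equiv.sumCongr (Equiv.refl m)
    ((Equiv.prodCongr (Equiv.optionSubtypeNe a).symm (Equiv.refl n)).trans
      optionProdEquiv)).trans (Equiv.sumAssoc m n _).symm

theorem reindex_replicatedBlockMatrix_single (a : ι) (c : R) (E : Matrix m m R)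
    (γ : Matrix m n R) (G Q : Matrix n n R) :
    reindex (splitBlockEquiv m n a) (splitBlockEquiv m n a)
        (replicatedBlockMatrix ι (Pi.single a c) E γ G Q) =
      fromBlocks (fromBlocks E (c • γ) (c • γᵀ) (G + (c * c) • Q)) 0 0 (1 ⊗ₖ G) := by
  ext ((i | i) | ⟨⟨k, hk⟩, i⟩) ((j | j) | ⟨⟨l, hl⟩, j⟩) <;>
    simp_all [splitBlockEquiv, replicatedBlockMatrix, vecMulVec_apply, Pi.single_apply, one_apply,
      eq_comm (a := a)]

theorem charpoly_replicatedBlockMatrix_single [Fintype m] [Fintype n] [Fintype ι]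
    [DecidableEq m] [DecidableEq n] (a : ι) (c : R) (E : Matrix m m R) (γ : Matrix m n R)
    (G Q : Matrix n n R) :
    (replicatedBlockMatrix ι (Pi.single a c) E γ G Q).charpoly =
      G.charpoly ^ (Fintype.card ι - 1) *
        (fromBlocks E (c • γ) (c • γᵀ) (G + (c * c) • Q)).charpoly := by
  rw [← charpoly_reindex (splitBlockEquiv m n a), reindex_replicatedBlockMatrix_single,
    charpoly_fromBlocks_zero₂₁, charpoly_one_kronecker, mul_comm]
  simp

end Matrix

theorem block_matrix_spectrum (t s z : ℕ) (hz : 1 ≤ z)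
    (E : Matrix (Fin t) (Fin t) ℝ) (γ : Matrix (Fin t) (Fin s) ℝ)
    (F Q : Matrix (Fin s) (Fin s) ℝ)
    (M : Matrix (Fin t ⊕ Fin z × Fin s) (Fin t ⊕ Fin z × Fin s) ℝ)
    (hM : M = Matrix.of fun p q =>
      match p, q with
      | Sum.inl i, Sum.inl j => E i j
      | Sum.inl i, Sum.inr (_, j) => γ i j
      | Sum.inr (_, i), Sum.inl j => γ j i
      | Sum.inr (k, i), Sum.inr (l, j) => if k = l then F i j else Q i j)
    (M' : Matrix (Fin t ⊕ Fin s) (Fin t ⊕ Fin s) ℝ)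
    (hM' : M' = Matrix.fromBlocks E ((Real.sqrt z) • γ) ((Real.sqrt z) • γᵀ)
      (F + ((z : ℝ) - 1) • Q)) :
    M.charpoly = (F - Q).charpoly ^ (z - 1) * M'.charpoly := by
  have hM_rep : M = replicatedBlockMatrix (Fin z) (fun _ => 1) E γ (F - Q) Q := by
    subst hM
    ext (i | ⟨k, i⟩) (j | ⟨l, j⟩) <;>
      simp [replicatedBlockMatrix, one_apply, vecMulVec_apply, ite_add]
  have hsqrt : √(z : ℝ) * √(z : ℝ) = z := Real.mul_self_sqrt (Nat.cast_nonneg z)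
  have hsqrt_ne : √(z : ℝ) ≠ 0 := Real.sqrt_ne_zero'.mpr (by exact_mod_cast hz)
  have hz_ne : (z : ℝ) ≠ 0 := Nat.cast_ne_zero.mpr (by omega)
  let a : Fin z := ⟨0, hz⟩
  obtain ⟨U, hU, hUv⟩ := exists_orthogonal_transpose_mulVec_eq_single
    (fun _ => (√(z : ℝ))⁻¹) (by simp [dotProduct, ← mul_inv, hsqrt, hz_ne]) a
  have hUw : Uᵀ *ᵥ (fun _ => 1) = Pi.single a √(z : ℝ) := by
    have hones : (fun _ : Fin z => (1 : ℝ)) = √(z : ℝ) • fun _ => (√(z : ℝ))⁻¹ := by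
      ext; simp [hsqrt_ne]
    rw [hones, mulVec_smul, hUv, ← Pi.single_smul', smul_eq_mul, mul_one]
  have hFQ : F - Q + (z : ℝ) • Q = F + ((z : ℝ) - 1) • Q := by
    rw [sub_smul, one_smul]; abel
  rw [hM_rep, ← charpoly_replicatedBlockMatrix_transpose_mulVec hU, hUw,
    charpoly_replicatedBlockMatrix_single, Fintype.card_fin, hM', hsqrt, hFQ]
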